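/- arXiv:1102.0852 — 6 statements merged into one kernel-verified Lean document; each statement's English description precedes it below -/
import Mathlib

section
/- With the hypotheses of the previous setting (f'' + K f = 0, m'' + G m = 0, same initial data, f > 0 on (0,∞), supp(G − K) ⊂ [a,b] ⊂ [1,∞)), define α(m) := sup_{t≥0} |m(t)/f(t) − 1|, assumed finite. Then for all t ≥ 0, |(m'f − m f')(t)| ≤ (α(m) + 1) · ‖G − K‖₂ · (∫_a^b f(s)⁴ ds)^{1/2}, where ‖G − K‖₂ := (∫_0^∞ |G − K|² ds)^{1/2}. -/
/-!
The Wronskian `W = m' f - m f'` vanishes at `0` and satisfies `W' = (K - G) m f` on `[0, ∞)`, so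
`W t = ∫₀ᵗ (K - G) m f`. The integrand vanishes outside `[a, b]`, and where `f > 0` we have
`|m f| = |m / f| f² ≤ (α + 1) f²`. Hence `|W t| ≤ (α + 1) ∫ₐᵇ |G - K| f²`, and Cauchy–Schwarz on
`[a, b]` finishes the proof, since `∫₀^∞ (G - K)² = ∫ₐᵇ (G - K)²`.
-/

open MeasureTheory Set

theorem integral_mul_le_sqrt_mul_sqrt {X : Type*} [MeasurableSpace X] {μ : Measure X}
    {u v : X → ℝ} (hu0 : 0 ≤ᵐ[μ] u) (hv0 : 0 ≤ᵐ[μ] v) (hu : MemLp u 2 μ) (hv : MemLp v 2 μ) :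
    ∫ x, u x * v x ∂μ ≤ √(∫ x, u x ^ 2 ∂μ) * √(∫ x, v x ^ 2 ∂μ) := by
  have h := integral_mul_le_Lp_mul_Lq_of_nonneg Real.HolderConjugate.two_two hu0 hv0
    (by simpa using hu) (by simpa using hv)
  simpa only [Real.rpow_two, ← Real.sqrt_eq_rpow] using h

theorem Continuous.memLp_two_restrict_Icc {u : ℝ → ℝ} (hu : Continuous u) (a b : ℝ) :
    MemLp u 2 (volume.restrict (Icc a b)) :=
  (memLp_two_iff_integrable_sq hu.aestronglyMeasurable).2 (hu.pow 2).integrableOn_Icc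

theorem abs_mul_le_of_abs_div_sub_one_le {x y α : ℝ} (hy : 0 < y) (h : |x / y - 1| ≤ α) :
    |x * y| ≤ (α + 1) * y ^ 2 := by
  have hxy : |x / y| ≤ α + 1 := by
    calc |x / y| = |(x / y - 1) + 1| := by ring_nf
      _ ≤ |x / y - 1| + |1| := abs_add_le _ _
      _ ≤ α + 1 := by rw [abs_one]; linarith
  calc |x * y| = |x / y| * y ^ 2 := by
        rw [abs_div, abs_mul, abs_of_pos hy]; field_simp
    _ ≤ (α + 1) * y ^ 2 := by gcongr

theorem abs_intervalIntegral_le_setIntegral_Icc {u w : ℝ → ℝ} {a b t : ℝ} (ht : 0 ≤ t)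
    (hu : Continuous u) (hw : Continuous w) (hw0 : ∀ s, 0 ≤ w s)
    (hsupp : ∀ s ∉ Icc a b, u s = 0) (hle : ∀ s ∈ Ioc 0 t, |u s| ≤ w s) :
    |∫ s in (0)..t, u s| ≤ ∫ s in Icc a b, w s := by
  rw [intervalIntegral.integral_of_le ht]
  calc |∫ s in Ioc 0 t, u s| ≤ ∫ s in Ioc 0 t, |u s| := abs_integral_le_integral_abs
    _ = ∫ s in Ioc 0 t ∩ Icc a b, |u s| :=
        setIntegral_eq_of_subset_of_forall_sdiff_eq_zero measurableSet_Ioc inter_subset_left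
          fun s hs => by simp [hsupp s fun h => hs.2 ⟨hs.1, h⟩]
    _ ≤ ∫ s in Ioc 0 t ∩ Icc a b, w s :=
        setIntegral_mono_on (hu.abs.integrableOn_Icc.mono_set inter_subset_right)
          (hw.integrableOn_Icc.mono_set inter_subset_right)
          (measurableSet_Ioc.inter measurableSet_Icc) fun s hs => hle s hs.1
    _ ≤ ∫ s in Icc a b, w s :=
        setIntegral_mono_set hw.integrableOn_Icc (ae_of_all _ hw0)
          (ae_of_all _ fun _ hs => hs.2)

noncomputable def wronskian (m f : ℝ → ℝ) (t : ℝ) : ℝ := deriv m t * f t - m t * deriv f t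

section Wronskian

variable {f m K G : ℝ → ℝ}

theorem hasDerivAt_wronskian (hf : ContDiff ℝ 2 f) (hm : ContDiff ℝ 2 m) {t : ℝ}
    (hft : deriv (deriv f) t + K t * f t = 0) (hmt : deriv (deriv m) t + G t * m t = 0) :
    HasDerivAt (wronskian m f) ((K t - G t) * (m t * f t)) t := by
  have h := ((hm.differentiable_deriv_two t).hasDerivAt.mul
      (hf.differentiable two_ne_zero t).hasDerivAt).sub
    ((hm.differentiable two_ne_zero t).hasDerivAt.mul (hf.differentiable_deriv_two t).hasDerivAt)
  exact h.congr_deriv (by linear_combination f t * hmt - m t * hft)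

theorem wronskian_eq_intervalIntegral (hf : ContDiff ℝ 2 f) (hm : ContDiff ℝ 2 m)
    (hKc : Continuous K) (hGc : Continuous G)
    (hfode : ∀ t ≥ (0:ℝ), deriv (deriv f) t + K t * f t = 0)
    (hmode : ∀ t ≥ (0:ℝ), deriv (deriv m) t + G t * m t = 0)
    (h0 : m 0 = f 0) (h0' : deriv m 0 = deriv f 0) {t : ℝ} (ht : 0 ≤ t) :
    wronskian m f t = ∫ s in (0)..t, (K s - G s) * (m s * f s) := by
  have hW0 : wronskian m f 0 = 0 := by simp only [wronskian, h0, h0']; ring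
  rw [intervalIntegral.integral_eq_sub_of_hasDerivAt (f := wronskian m f), hW0, sub_zero]
  · intro s hs
    rw [uIcc_of_le ht] at hs
    exact hasDerivAt_wronskian hf hm (hfode s hs.1) (hmode s hs.1)
  · exact ((hKc.sub hGc).mul (hm.continuous.mul hf.continuous)).intervalIntegrable 0 t

theorem abs_wronskian_le (hf : ContDiff ℝ 2 f) (hm : ContDiff ℝ 2 m)
    (hKc : Continuous K) (hGc : Continuous G)
    (hfode : ∀ t ≥ (0:ℝ), deriv (deriv f) t + K t * f t = 0)
    (hmode : ∀ t ≥ (0:ℝ), deriv (deriv m) t + G t * m t = 0)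
    (h0 : m 0 = f 0) (h0' : deriv m 0 = deriv f 0) (hfpos : ∀ t > (0:ℝ), 0 < f t)
    {a b α : ℝ} (hGK : ∀ s ∉ Icc a b, G s - K s = 0) (hα : ∀ s ≥ (0:ℝ), |m s / f s - 1| ≤ α)
    {t : ℝ} (ht : 0 ≤ t) :
    |wronskian m f t| ≤ (α + 1) * ∫ s in Icc a b, |G s - K s| * f s ^ 2 := by
  have hα0 : 0 ≤ α := (abs_nonneg _).trans (hα 0 le_rfl)
  rw [wronskian_eq_intervalIntegral hf hm hKc hGc hfode hmode h0 h0' ht, ← integral_const_mul]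
  refine abs_intervalIntegral_le_setIntegral_Icc ht (by fun_prop) (by fun_prop)
    (fun s => by positivity) (fun s hs => by rw [← neg_sub, hGK s hs, neg_zero, zero_mul])
    fun s hs => ?_
  calc |(K s - G s) * (m s * f s)| = |G s - K s| * |m s * f s| := by rw [abs_mul, abs_sub_comm]
    _ ≤ |G s - K s| * ((α + 1) * f s ^ 2) := by
        gcongr
        exact abs_mul_le_of_abs_div_sub_one_le (hfpos s hs.1) (hα s hs.1.le)
    _ = (α + 1) * (|G s - K s| * f s ^ 2) := by ring

end Wronskian

theorem stmt1_general (f m K G : ℝ → ℝ) (a b : ℝ) (ha : 1 ≤ a) (α : ℝ)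
    (hKc : Continuous K) (hGc : Continuous G)
    (hf : ContDiff ℝ 2 f) (hm : ContDiff ℝ 2 m)
    (hfode : ∀ t ≥ (0:ℝ), deriv (deriv f) t + K t * f t = 0)
    (hmode : ∀ t ≥ (0:ℝ), deriv (deriv m) t + G t * m t = 0)
    (h0 : m 0 = f 0) (h0' : deriv m 0 = deriv f 0)
    (hfpos : ∀ t > (0:ℝ), 0 < f t)
    (hsupp : ∀ t, t < a ∨ b < t → G t = K t)
    (hα : IsLUB {x : ℝ | ∃ t ≥ (0:ℝ), x = |m t / f t - 1|} α) :
    ∀ t ≥ (0:ℝ), |deriv m t * f t - m t * deriv f t| ≤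
      (α + 1) * Real.sqrt (∫ s in Ici (0:ℝ), (G s - K s) ^ 2) *
        Real.sqrt (∫ s in Icc a b, (f s) ^ 4) := by
  intro t ht
  have hGK : ∀ s ∉ Icc a b, G s - K s = 0 := fun s hs => by
    rw [hsupp s ((not_and_or.1 hs).imp not_le.1 not_le.1), sub_self]
  have hCS := integral_mul_le_sqrt_mul_sqrt (ae_of_all _ fun s => abs_nonneg (G s - K s))
    (ae_of_all _ fun s => sq_nonneg (f s)) ((hGc.sub hKc).abs.memLp_two_restrict_Icc a b)
    ((hf.continuous.pow 2).memLp_two_restrict_Icc a b)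
  simp only [sq_abs, ← pow_mul, Nat.reduceMul] at hCS
  have hL2 : ∫ s in Ici (0:ℝ), (G s - K s) ^ 2 = ∫ s in Icc a b, (G s - K s) ^ 2 :=
    setIntegral_eq_of_subset_of_forall_sdiff_eq_zero measurableSet_Ici
      (fun s hs => le_trans (by linarith) hs.1) fun s hs => by simp [hGK s hs.2]
  have hα0 : 0 ≤ α := (abs_nonneg _).trans (hα.1 ⟨0, le_rfl, rfl⟩)
  refine (abs_wronskian_le hf hm hKc hGc hfode hmode h0 h0' hfpos hGK
    (fun s hs => hα.1 ⟨s, hs, rfl⟩) ht).trans ?_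
  rw [hL2, mul_assoc]
  gcongr

theorem stmt1 (f m K G : ℝ → ℝ) (a b : ℝ) (ha : 1 ≤ a) (hab : a < b) (α : ℝ)
    (hKc : Continuous K) (hGc : Continuous G)
    (hf : ContDiff ℝ 2 f) (hm : ContDiff ℝ 2 m)
    (hfode : ∀ t ≥ (0:ℝ), deriv (deriv f) t + K t * f t = 0)
    (hmode : ∀ t ≥ (0:ℝ), deriv (deriv m) t + G t * m t = 0)
    (h0 : m 0 = f 0) (h0' : deriv m 0 = deriv f 0)
    (hfpos : ∀ t > (0:ℝ), 0 < f t)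
    (hsupp : ∀ t, t < a ∨ b < t → G t = K t)
    (hα : IsLUB {x : ℝ | ∃ t ≥ (0:ℝ), x = |m t / f t - 1|} α) :
    ∀ t ≥ (0:ℝ), |deriv m t * f t - m t * deriv f t| ≤
      (α + 1) * Real.sqrt (∫ s in Ici (0:ℝ), (G s - K s) ^ 2) *
        Real.sqrt (∫ s in Icc a b, (f s) ^ 4) :=
  stmt1_general f m K G a b ha α hKc hGc hf hm hfode hmode h0 h0' hfpos hsupp hα
end

section
/- Under the same hypotheses, ∫_a^b |G(t)m(t) − K(t)f(t)| dt ≤ (α(m) + 1)·‖G − K‖₂·(∫_a^b f(t)² dt)^{1/2} + α(m)·∫_a^b |f''(t)| dt. -/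
/-!
With `σ = m / f - 1` one has `G m - K f = (G - K) f (σ + 1) + K f σ` and `K f = -f''`, so pointwise
`|G m - K f| ≤ (α + 1) |G - K| f + α |f''|`. Integrate over `[a, b]`, apply Cauchy–Schwarz to the
first term, and note that `G - K` vanishes off `[a, b]`.
-/

open MeasureTheory Set

theorem abs_mul_sub_mul_le_of_abs_div_sub_one_le {g k x y α : ℝ} (hx : x ≠ 0)
    (hσ : |y / x - 1| ≤ α) :
    |g * y - k * x| ≤ (α + 1) * (|g - k| * |x|) + α * |k * x| := by
  set σ := y / x - 1
  have hy : y = x * (σ + 1) := by simp only [σ]; field_simp; ring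
  have hσ1 : |σ + 1| ≤ α + 1 := (abs_add_le σ 1).trans (by rw [abs_one]; linarith)
  calc |g * y - k * x| = |(g - k) * x * (σ + 1) + k * x * σ| := by rw [hy]; ring_nf
    _ ≤ |g - k| * |x| * |σ + 1| + |k * x| * |σ| := by
        simpa only [abs_mul] using abs_add_le ((g - k) * x * (σ + 1)) (k * x * σ)
    _ ≤ |g - k| * |x| * (α + 1) + |k * x| * α := by gcongr
    _ = (α + 1) * (|g - k| * |x|) + α * |k * x| := by ring

theorem Continuous.memLp_restrict_of_isCompact {X E : Type*} [TopologicalSpace X]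
    [MeasurableSpace X] [OpensMeasurableSpace X] [T2Space X] [NormedAddCommGroup E]
    [SecondCountableTopologyEither X E] {μ : Measure X} [IsFiniteMeasureOnCompacts μ]
    {s : Set X} (hs : IsCompact s) {g : X → E} (hg : Continuous g) (p : ENNReal) :
    MemLp g p (μ.restrict s) := by
  have : IsFiniteMeasure (μ.restrict s) := isFiniteMeasure_restrict.2 hs.measure_lt_top.ne
  obtain ⟨C, hC⟩ := hs.exists_bound_of_continuousOn hg.continuousOn
  exact .of_bound hg.aestronglyMeasurable C (ae_restrict_of_forall_mem hs.measurableSet hC)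

theorem integral_abs_mul_abs_le_sqrt_mul_sqrt {X : Type*} [MeasurableSpace X] {μ : Measure X}
    {u v : X → ℝ} (hu : MemLp u 2 μ) (hv : MemLp v 2 μ) :
    ∫ x, |u x| * |v x| ∂μ ≤ √(∫ x, u x ^ 2 ∂μ) * √(∫ x, v x ^ 2 ∂μ) := by
  have h := integral_mul_norm_le_Lp_mul_Lq Real.HolderConjugate.two_two
    (by simpa using hu) (by simpa using hv)
  have hsq : ∀ w : X → ℝ, ∫ x, ‖w x‖ ^ (2 : ℝ) ∂μ = ∫ x, w x ^ 2 ∂μ := fun w ↦ by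
    simp only [Real.norm_eq_abs, Real.rpow_two, sq_abs]
  rw [hsq u, hsq v, ← Real.sqrt_eq_rpow, ← Real.sqrt_eq_rpow] at h
  simpa only [Real.norm_eq_abs] using h

theorem setIntegral_le_mul_add_mul {X : Type*} [MeasurableSpace X] {μ : Measure X} {s : Set X}
    (hs : MeasurableSet s) {F u v : X → ℝ} (hF : IntegrableOn F s μ) (hu : IntegrableOn u s μ)
    (hv : IntegrableOn v s μ) {c d : ℝ} (h : ∀ x ∈ s, F x ≤ c * u x + d * v x) :
    ∫ x in s, F x ∂μ ≤ c * (∫ x in s, u x ∂μ) + d * ∫ x in s, v x ∂μ := by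
  rw [← integral_const_mul, ← integral_const_mul, ← integral_add (hu.const_mul c)
    (hv.const_mul d)]
  exact setIntegral_mono_on hF ((hu.const_mul c).add (hv.const_mul d)) hs h

theorem stmt3_general (f m K G : ℝ → ℝ) (a b : ℝ) (ha : 1 ≤ a) (α : ℝ)
    (hKc : Continuous K) (hGc : Continuous G)
    (hf : ContDiff ℝ 2 f) (hm : ContDiff ℝ 2 m)
    (hfode : ∀ t ≥ (0:ℝ), deriv (deriv f) t + K t * f t = 0)
    (hfpos : ∀ t > (0:ℝ), 0 < f t)
    (hsupp : ∀ t, t < a ∨ b < t → G t = K t)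
    (hα : IsLUB {x : ℝ | ∃ t ≥ (0:ℝ), x = |m t / f t - 1|} α) :
    ∫ t in Icc a b, |G t * m t - K t * f t| ≤
      (α + 1) * Real.sqrt (∫ t in Ici (0:ℝ), (G t - K t) ^ 2) *
        Real.sqrt (∫ t in Icc a b, (f t) ^ 2) +
      α * ∫ t in Icc a b, |deriv (deriv f) t| := by
  have hf'' : Continuous (deriv (deriv f)) := (hf.deriv' (n := 1)).continuous_deriv le_rfl
  have hα1 : 0 ≤ α + 1 := by linarith [abs_nonneg (m 0 / f 0 - 1), hα.1 ⟨0, le_rfl, rfl⟩]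
  have hpt : ∀ t ∈ Icc a b, |G t * m t - K t * f t| ≤
      (α + 1) * (|G t - K t| * |f t|) + α * |deriv (deriv f) t| := fun t ht ↦ by
    have ht0 : 0 < t := by linarith [ht.1]
    have hKf : K t * f t = -deriv (deriv f) t := by linarith [hfode t ht0.le]
    simpa only [hKf, abs_neg] using abs_mul_sub_mul_le_of_abs_div_sub_one_le (g := G t)
      (k := K t) (hfpos t ht0).ne' (hα.1 ⟨t, ht0.le, rfl⟩)
  have hint : ∫ t in Icc a b, |G t * m t - K t * f t| ≤
      (α + 1) * (∫ t in Icc a b, |G t - K t| * |f t|) +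
        α * ∫ t in Icc a b, |deriv (deriv f) t| :=
    setIntegral_le_mul_add_mul measurableSet_Icc
      ((hGc.mul hm.continuous).sub (hKc.mul hf.continuous)).abs.integrableOn_Icc
      ((hGc.sub hKc).abs.mul hf.continuous.abs).integrableOn_Icc hf''.abs.integrableOn_Icc hpt
  have hCS : ∫ t in Icc a b, |G t - K t| * |f t| ≤
      √(∫ t in Icc a b, (G t - K t) ^ 2) * √(∫ t in Icc a b, f t ^ 2) :=
    integral_abs_mul_abs_le_sqrt_mul_sqrt
      ((hGc.sub hKc).memLp_restrict_of_isCompact isCompact_Icc 2)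
      (hf.continuous.memLp_restrict_of_isCompact isCompact_Icc 2)
  have hGK : ∫ t in Ici (0:ℝ), (G t - K t) ^ 2 = ∫ t in Icc a b, (G t - K t) ^ 2 :=
    setIntegral_eq_of_subset_of_forall_sdiff_eq_zero measurableSet_Ici
      (fun t ht ↦ (zero_le_one.trans ha).trans ht.1) fun t ht ↦ by
        rw [hsupp t (by simpa only [mem_Icc, not_and_or, not_le] using ht.2), sub_self,
          sq, zero_mul]
  rw [hGK, mul_assoc]
  exact hint.trans (by gcongr)

theorem stmt3 (f m K G : ℝ → ℝ) (a b : ℝ) (ha : 1 ≤ a) (hab : a < b) (α : ℝ)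
    (hKc : Continuous K) (hGc : Continuous G)
    (hf : ContDiff ℝ 2 f) (hm : ContDiff ℝ 2 m)
    (hfode : ∀ t ≥ (0:ℝ), deriv (deriv f) t + K t * f t = 0)
    (hmode : ∀ t ≥ (0:ℝ), deriv (deriv m) t + G t * m t = 0)
    (h0 : m 0 = f 0) (h0' : deriv m 0 = deriv f 0)
    (hfpos : ∀ t > (0:ℝ), 0 < f t)
    (hsupp : ∀ t, t < a ∨ b < t → G t = K t)
    (hα : IsLUB {x : ℝ | ∃ t ≥ (0:ℝ), x = |m t / f t - 1|} α) :
    ∫ t in Icc a b, |G t * m t - K t * f t| ≤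
      (α + 1) * Real.sqrt (∫ t in Ici (0:ℝ), (G t - K t) ^ 2) *
        Real.sqrt (∫ t in Icc a b, (f t) ^ 2) +
      α * ∫ t in Icc a b, |deriv (deriv f) t| :=
  stmt3_general f m K G a b ha α hKc hGc hf hm hfode hfpos hsupp hα
end

section
/- (Stability without the f'' integrability assumption) Let K : [0,∞) → ℝ be continuous and f the solution of f'' + K f = 0 with f(0) = 0, f'(0) = 1, satisfying f > 0 on (0,∞) and ∫_1^∞ f^(−2) dt < ∞. Then for every ε > 0 and bounded interval (a,b) ⊂ [1,∞) there exists δ > 0 such that any continuous G with supp(G − K) ⊂ [a,b] and ‖G − K‖₂ < δ yields a solution m of m'' + G m = 0, m(0) = 0, m'(0) = 1, with ∫_1^∞ |m^(−2) − f^(−2)| dt < ε. -/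
/-!
On `[0, b]` the `L²` bound makes `∫₀ᵇ |G - K|` small, and an integral Gronwall argument for
`|u| + |u'|` bounds first `m`, then `|m - f| + |m' - f'|`, by a constant times `∫₀ᵇ |G - K|`.
Beyond `b` the two equations coincide, so the Wronskian `W = m' f - m f'` is constant and
`m / f = m(b) / f(b) + W ∫_b^t f⁻²`. As `∫_1^∞ f⁻² < ∞`, this keeps `m / f` uniformly close
to `1` on `[1, ∞)`, and `|m⁻² - f⁻²| ≤ 10 |m / f - 1| f⁻²` integrates to the claim.
-/

open MeasureTheory Set intervalIntegral Real

theorem le_mul_exp_integral_of_le_add_integral {φ lam : ℝ → ℝ} {b c : ℝ}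
    (hφ : Continuous φ) (hlam : Continuous lam) (hlam0 : ∀ t, 0 ≤ lam t)
    (h : ∀ t ∈ Icc 0 b, φ t ≤ c + ∫ s in 0..t, lam s * φ s) :
    ∀ t ∈ Icc 0 b, φ t ≤ c * exp (∫ s in 0..t, lam s) := by
  set F : ℝ → ℝ := fun t => ∫ s in 0..t, lam s * φ s
  set Λ : ℝ → ℝ := fun t => ∫ s in 0..t, lam s
  have hF : ∀ t, HasDerivAt F (lam t * φ t) t := fun t =>
    integral_hasDerivAt_right ((hlam.mul hφ).intervalIntegrable _ _)
      ((hlam.mul hφ).stronglyMeasurableAtFilter _ _) (hlam.mul hφ).continuousAt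
  have hΛ : ∀ t, HasDerivAt Λ (lam t) t := fun t =>
    integral_hasDerivAt_right (hlam.intervalIntegrable _ _)
      (hlam.stronglyMeasurableAtFilter _ _) hlam.continuousAt
  -- `(c + F) e^{-Λ}` is antitone on `[0, b]`: its derivative is `lam (φ - c - F) e^{-Λ} ≤ 0`.
  set P : ℝ → ℝ := fun t => (c + F t) * exp (-Λ t)
  have hP : ∀ t,
      HasDerivAt P (lam t * φ t * exp (-Λ t) + (c + F t) * (exp (-Λ t) * -lam t)) t :=
    fun t => ((hF t).const_add c).mul (hΛ t).neg.exp
  have hanti : AntitoneOn P (Icc 0 b) := by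
    refine antitoneOn_of_hasDerivWithinAt_nonpos (convex_Icc 0 b)
      (fun t _ => (hP t).continuousAt.continuousWithinAt) (fun t _ => (hP t).hasDerivWithinAt) ?_
    intro t ht
    rw [interior_Icc] at ht
    have := mul_le_mul_of_nonneg_left (h t (Ioo_subset_Icc_self ht)) (hlam0 t)
    have := (exp_pos (-Λ t)).le
    nlinarith
  intro t ht
  have hPt : P t ≤ c := by
    simpa [P, F, Λ] using hanti ⟨le_rfl, ht.1.trans ht.2⟩ ht ht.1
  calc φ t ≤ c + F t := h t ht
    _ = P t * exp (Λ t) := by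
        simp only [P, mul_assoc, ← exp_add, neg_add_cancel, exp_zero, mul_one]
    _ ≤ c * exp (Λ t) := mul_le_mul_of_nonneg_right hPt (exp_pos _).le

theorem ContDiff.hasDerivAt_deriv_two {u : ℝ → ℝ} (hu : ContDiff ℝ 2 u) (t : ℝ) :
    HasDerivAt (deriv u) (deriv (deriv u) t) t :=
  (hu.differentiable_deriv_two t).hasDerivAt

theorem ContDiff.continuous_deriv_deriv_two {u : ℝ → ℝ} (hu : ContDiff ℝ 2 u) :
    Continuous (deriv (deriv u)) :=
  hu.deriv'.continuous_deriv_one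

theorem abs_sub_le_integral_abs_of_hasDerivAt {u u' : ℝ → ℝ}
    (hu : ∀ t, HasDerivAt u (u' t) t) (hu' : Continuous u') {t : ℝ} (ht : 0 ≤ t) :
    |u t - u 0| ≤ ∫ s in 0..t, |u' s| := by
  rw [← integral_eq_sub_of_hasDerivAt (fun s _ => hu s) (hu'.intervalIntegrable _ _)]
  exact abs_integral_le_integral_abs ht

theorem abs_add_abs_le_of_abs_second_deriv_le {u u' u'' lam r : ℝ → ℝ} {b : ℝ}
    (hu : ∀ t, HasDerivAt u (u' t) t) (hu' : ∀ t, HasDerivAt u' (u'' t) t)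
    (hu'' : Continuous u'') (hlam : Continuous lam) (hr : Continuous r)
    (hlam0 : ∀ t, 0 ≤ lam t) (hr0 : ∀ t, 0 ≤ r t)
    (h : ∀ t ∈ Icc 0 b, |u'' t| ≤ lam t * |u t| + r t) :
    ∀ t ∈ Icc 0 b, |u t| + |u' t| ≤
      (|u 0| + |u' 0| + ∫ s in 0..b, r s) * exp (∫ s in 0..b, (1 + lam s)) := by
  have hu'c : Continuous u' := continuous_iff_continuousAt.2 fun t => (hu' t).continuousAt
  have huc : Continuous u := continuous_iff_continuousAt.2 fun t => (hu t).continuousAt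
  set φ : ℝ → ℝ := fun t => |u t| + |u' t|
  have hφ : Continuous φ := huc.abs.add hu'c.abs
  set c := |u 0| + |u' 0| + ∫ s in 0..b, r s
  have hint : ∀ t ∈ Icc 0 b, φ t ≤ c + ∫ s in 0..t, (1 + lam s) * φ s := by
    intro t ht
    have hg : Continuous fun s => (1 + lam s) * φ s := by fun_prop
    have h1 := abs_sub_le_integral_abs_of_hasDerivAt hu hu'c ht.1
    have h2 := abs_sub_le_integral_abs_of_hasDerivAt hu' hu'' ht.1
    have h3 : ∫ s in 0..t, (|u' s| + |u'' s|) ≤ ∫ s in 0..t, ((1 + lam s) * φ s + r s) :=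
      integral_mono_on ht.1 ((hu'c.abs.add hu''.abs).intervalIntegrable _ _)
        ((hg.add hr).intervalIntegrable _ _) fun s hs => by
          have := h s ⟨hs.1, hs.2.trans ht.2⟩
          have := mul_nonneg (hlam0 s) (abs_nonneg (u' s))
          simp only [φ]; nlinarith [abs_nonneg (u s)]
    have h4 : ∫ s in 0..t, r s ≤ ∫ s in 0..b, r s :=
      integral_mono_interval le_rfl ht.1 ht.2 (Filter.Eventually.of_forall hr0)
        (hr.intervalIntegrable _ _)
    rw [integral_add (hu'c.abs.intervalIntegrable _ _) (hu''.abs.intervalIntegrable _ _),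
      integral_add (hg.intervalIntegrable _ _) (hr.intervalIntegrable _ _)] at h3
    have := abs_sub_abs_le_abs_sub (u t) (u 0)
    have := abs_sub_abs_le_abs_sub (u' t) (u' 0)
    simp only [φ, c]; linarith
  intro t ht
  have hc : 0 ≤ c := by
    have : 0 ≤ ∫ s in 0..b, r s := integral_nonneg (ht.1.trans ht.2) fun s _ => hr0 s
    positivity
  have hlam1 : Continuous fun s => 1 + lam s := by fun_prop
  refine (le_mul_exp_integral_of_le_add_integral hφ hlam1
    (fun s => by linarith [hlam0 s]) hint t ht).trans ?_
  gcongr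
  exact integral_mono_interval le_rfl ht.1 ht.2
    (Filter.Eventually.of_forall fun s => by simp only [Pi.zero_apply]; linarith [hlam0 s])
    (hlam1.intervalIntegrable _ _)

theorem intervalIntegral_abs_le_of_sqrt_integral_sq_lt {u : ℝ → ℝ} {b δ : ℝ}
    (hu : Continuous u) (hu2 : IntegrableOn (fun t => u t ^ 2) (Ici 0)) (hb : 0 ≤ b)
    (h : √(∫ t in Ici 0, u t ^ 2) < δ) :
    ∫ s in 0..b, |u s| ≤ (b + 1) / 2 * δ := by
  have hδ : 0 < δ := (sqrt_nonneg _).trans_lt h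
  have hsq : ∫ s in 0..b, u s ^ 2 ≤ δ ^ 2 := by
    rw [integral_of_le hb]
    refine (setIntegral_mono_set hu2 (ae_of_all _ fun _ => sq_nonneg _) ?_).trans
      ((sqrt_lt' hδ).1 h).le
    exact (Ioc_subset_Ioi_self.trans Ioi_subset_Ici_self).eventuallyLE
  have hu2c : Continuous fun s => u s ^ 2 / (2 * δ) := by fun_prop
  calc ∫ s in 0..b, |u s| ≤ ∫ s in 0..b, (δ / 2 + u s ^ 2 / (2 * δ)) := by
        refine integral_mono_on hb (hu.abs.intervalIntegrable _ _)
          ((continuous_const.add hu2c).intervalIntegrable _ _) fun s _ => ?_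
        -- AM-GM
        rw [← sq_abs (u s), div_add_div _ _ two_ne_zero (by positivity),
          le_div_iff₀ (by positivity)]
        nlinarith [sq_nonneg (|u s| - δ)]
    _ = δ / 2 * b + (∫ s in 0..b, u s ^ 2) / (2 * δ) := by
        rw [integral_add intervalIntegrable_const (hu2c.intervalIntegrable _ _)]
        simp only [intervalIntegral.integral_const, intervalIntegral.integral_div, smul_eq_mul,
          sub_zero]
        ring
    _ ≤ δ / 2 * b + δ ^ 2 / (2 * δ) := by gcongr
    _ = (b + 1) / 2 * δ := by field_simp

theorem wronskian_eq_of_le {P u u' u'' v v' v'' : ℝ → ℝ} {b t : ℝ}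
    (hu : ∀ s, HasDerivAt u (u' s) s) (hu' : ∀ s, HasDerivAt u' (u'' s) s)
    (hv : ∀ s, HasDerivAt v (v' s) s) (hv' : ∀ s, HasDerivAt v' (v'' s) s)
    (hu'' : ∀ s ≥ b, u'' s = -(P s * u s)) (hv'' : ∀ s ≥ b, v'' s = -(P s * v s))
    (ht : b ≤ t) :
    u' t * v t - u t * v' t = u' b * v b - u b * v' b := by
  have hW : ∀ s ≥ b, HasDerivAt (fun s => u' s * v s - u s * v' s) 0 s := fun s hs => by
    refine (((hu' s).mul (hv s)).sub ((hu s).mul (hv' s))).congr_deriv ?_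
    rw [hu'' s hs, hv'' s hs]; ring
  exact constant_of_has_deriv_right_zero
    (fun s hs => (hW s hs.1).continuousAt.continuousWithinAt)
    (fun s hs => (hW s hs.1).hasDerivWithinAt) t ⟨ht, le_rfl⟩

theorem div_eq_add_wronskian_mul_integral {P u u' u'' v v' v'' : ℝ → ℝ} {b t : ℝ}
    (hu : ∀ s, HasDerivAt u (u' s) s) (hu' : ∀ s, HasDerivAt u' (u'' s) s)
    (hv : ∀ s, HasDerivAt v (v' s) s) (hv' : ∀ s, HasDerivAt v' (v'' s) s)
    (hu'' : ∀ s ≥ b, u'' s = -(P s * u s)) (hv'' : ∀ s ≥ b, v'' s = -(P s * v s))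
    (hv0 : ∀ s ∈ Icc b t, v s ≠ 0) (ht : b ≤ t) :
    u t / v t = u b / v b + (u' b * v b - u b * v' b) * ∫ s in b..t, (v s ^ 2)⁻¹ := by
  have hderiv : ∀ s ∈ uIcc b t, HasDerivAt (fun s => u s / v s)
      ((u' b * v b - u b * v' b) * (v s ^ 2)⁻¹) s := fun s hs => by
    rw [uIcc_of_le ht] at hs
    rw [← wronskian_eq_of_le hu hu' hv hv' hu'' hv'' hs.1, ← div_eq_mul_inv]
    exact (hu s).div (hv s) (hv0 s hs)
  have hvc : ContinuousOn v (Icc b t) := fun s _ => (hv s).continuousAt.continuousWithinAt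
  have hint : IntervalIntegrable (fun s => (u' b * v b - u b * v' b) * (v s ^ 2)⁻¹) volume b t :=
    (continuousOn_const.mul ((hvc.pow 2).inv₀ fun s hs => pow_ne_zero 2 (hv0 s hs))
      |>.intervalIntegrable_of_Icc ht)
  have := integral_eq_sub_of_hasDerivAt hderiv hint
  rw [intervalIntegral.integral_const_mul] at this
  linarith

theorem abs_inv_sq_sub_one_le {q η : ℝ} (h : |q - 1| ≤ η) (hη : η ≤ 1 / 2) :
    |(q ^ 2)⁻¹ - 1| ≤ 10 * η := by
  obtain ⟨hq₁, hq₂⟩ := abs_le.1 (h.trans hη)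
  have hq : 0 < q ^ 2 := by nlinarith
  rw [inv_eq_one_div, div_sub_one hq.ne', abs_div, abs_of_pos hq, div_le_iff₀ hq,
    show 1 - q ^ 2 = (1 - q) * (1 + q) by ring, abs_mul, abs_sub_comm,
    abs_of_pos (by linarith : 0 < 1 + q)]
  have hη0 : 0 ≤ η := (abs_nonneg _).trans h
  have hq4 : 1 / 4 ≤ q ^ 2 := by nlinarith
  calc |q - 1| * (1 + q) ≤ η * (5 / 2) := mul_le_mul h (by linarith) (by linarith) hη0
    _ ≤ 10 * η * q ^ 2 := by nlinarith

theorem integral_abs_inv_sq_sub_inv_sq_le {f m : ℝ → ℝ} {η : ℝ} (hf : Continuous f)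
    (hm : Continuous m) (hfint : IntegrableOn (fun t => (f t ^ 2)⁻¹) (Ici 1))
    (hη : η ≤ 1 / 2) (h : ∀ t ≥ 1, |m t / f t - 1| ≤ η) :
    ∫ t in Ici 1, |(m t ^ 2)⁻¹ - (f t ^ 2)⁻¹| ≤
      10 * η * ∫ t in Ici 1, (f t ^ 2)⁻¹ := by
  have hpt : ∀ t ∈ Ici (1:ℝ), |(m t ^ 2)⁻¹ - (f t ^ 2)⁻¹| ≤ 10 * η * (f t ^ 2)⁻¹ :=
      fun t ht => by
    have hft : f t ≠ 0 := fun h0 => by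
      have := h t ht
      rw [h0, div_zero, zero_sub, abs_neg, abs_one] at this
      linarith
    rw [show (m t ^ 2)⁻¹ - (f t ^ 2)⁻¹ = (f t ^ 2)⁻¹ * (((m t / f t) ^ 2)⁻¹ - 1) by
      rw [div_pow, inv_div, mul_sub, mul_one, ← mul_div_assoc,
        inv_mul_cancel₀ (pow_ne_zero 2 hft), one_div],
      abs_mul, abs_of_nonneg (by positivity), mul_comm]
    exact mul_le_mul_of_nonneg_right (abs_inv_sq_sub_one_le (h t ht) hη) (by positivity)
  have hmeas : AEStronglyMeasurable (fun t => |(m t ^ 2)⁻¹ - (f t ^ 2)⁻¹|) :=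
    ((hm.pow 2).measurable.inv.sub (hf.pow 2).measurable.inv).abs.aestronglyMeasurable
  have hdom : IntegrableOn (fun t => 10 * η * (f t ^ 2)⁻¹) (Ici 1) := hfint.const_mul _
  rw [← MeasureTheory.integral_const_mul]
  refine setIntegral_mono_on (hdom.mono' hmeas.restrict ?_) hdom measurableSet_Ici hpt
  exact ae_restrict_of_forall_mem measurableSet_Ici fun t ht => by
    rw [Real.norm_eq_abs, abs_abs]; exact hpt t ht

theorem eq_of_le_of_eq_off_Icc {G K : ℝ → ℝ} {a b : ℝ}
    (hG : Continuous G) (hK : Continuous K) (h : ∀ t ∉ Icc a b, G t = K t) :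
    ∀ t ≥ b, G t = K t := by
  have : EqOn G K (Ioi b) := fun t ht => h t fun hmem => (not_le.2 ht) hmem.2
  intro t ht
  exact this.closure hG hK (by rwa [closure_Ioi])

section

variable {K f : ℝ → ℝ}

theorem abs_le_exp_integral_of_ode {G m : ℝ → ℝ} (hG : Continuous G) (hm : ContDiff ℝ 2 m)
    (hmode : ∀ t ≥ (0:ℝ), deriv (deriv m) t + G t * m t = 0)
    (hm0 : m 0 = 0) (hm0' : deriv m 0 = 1) {b : ℝ} :
    ∀ t ∈ Icc 0 b, |m t| ≤ exp (∫ s in 0..b, (1 + |G s|)) := by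
  intro t ht
  have := abs_add_abs_le_of_abs_second_deriv_le (lam := fun s => |G s|) (r := 0)
    (fun s => (hm.differentiable two_ne_zero s).hasDerivAt) hm.hasDerivAt_deriv_two
    hm.continuous_deriv_deriv_two hG.abs continuous_const (fun _ => abs_nonneg _) (fun _ => le_rfl)
    (fun s hs => by rw [eq_neg_of_add_eq_zero_left (hmode s hs.1), abs_neg, abs_mul]; simp) t ht
  simp only [hm0, hm0', abs_zero, abs_one, Pi.zero_apply, intervalIntegral.integral_zero,
    zero_add, add_zero, one_mul] at this
  linarith [abs_nonneg (deriv m t)]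

theorem abs_sub_add_abs_deriv_sub_le_of_ode {G m : ℝ → ℝ}
    (hK : Continuous K) (hG : Continuous G)
    (hf : ContDiff ℝ 2 f) (hm : ContDiff ℝ 2 m)
    (hfode : ∀ t ≥ (0:ℝ), deriv (deriv f) t + K t * f t = 0)
    (hmode : ∀ t ≥ (0:ℝ), deriv (deriv m) t + G t * m t = 0)
    (h0 : m 0 = f 0) (h0' : deriv m 0 = deriv f 0) {b M : ℝ}
    (hM : ∀ t ∈ Icc 0 b, |m t| ≤ M) :
    ∀ t ∈ Icc 0 b, |m t - f t| + |deriv m t - deriv f t| ≤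
      M * (∫ s in 0..b, |G s - K s|) * exp (∫ s in 0..b, (1 + |K s|)) := by
  intro t ht
  have hM0 : 0 ≤ M := (abs_nonneg _).trans (hM 0 ⟨le_rfl, ht.1.trans ht.2⟩)
  have hdiff : ∀ s ∈ Icc 0 b, |deriv (deriv m) s - deriv (deriv f) s| ≤
      |K s| * |m s - f s| + M * |G s - K s| := fun s hs => by
    rw [eq_neg_of_add_eq_zero_left (hmode s hs.1), eq_neg_of_add_eq_zero_left (hfode s hs.1),
      show -(G s * m s) - -(K s * f s) = -(K s * (m s - f s)) - (G s - K s) * m s by ring]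
    refine (abs_sub _ _).trans ?_
    rw [abs_neg, abs_mul, abs_mul, mul_comm M]
    gcongr
    exact hM s hs
  have := abs_add_abs_le_of_abs_second_deriv_le (u := fun s => m s - f s)
    (u' := fun s => deriv m s - deriv f s) (lam := fun s => |K s|)
    (r := fun s => M * |G s - K s|)
    (fun s => (hm.differentiable two_ne_zero s).hasDerivAt.sub
      (hf.differentiable two_ne_zero s).hasDerivAt)
    (fun s => (hm.hasDerivAt_deriv_two s).sub (hf.hasDerivAt_deriv_two s))
    (hm.continuous_deriv_deriv_two.sub hf.continuous_deriv_deriv_two) hK.abs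
    (continuous_const.mul (hG.sub hK).abs) (fun _ => abs_nonneg _)
    (fun _ => mul_nonneg hM0 (abs_nonneg _)) hdiff t ht
  simpa [h0, h0', intervalIntegral.integral_const_mul] using this

theorem exists_abs_sub_add_abs_deriv_sub_le (hK : Continuous K) (hf : ContDiff ℝ 2 f)
    (hfode : ∀ t ≥ (0:ℝ), deriv (deriv f) t + K t * f t = 0)
    (hf0 : f 0 = 0) (hf0' : deriv f 0 = 1) (b : ℝ) :
    ∃ A ≥ 0, ∀ G m : ℝ → ℝ, Continuous G → ∫ s in 0..b, |G s - K s| ≤ 1 →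
      ContDiff ℝ 2 m → (∀ t ≥ (0:ℝ), deriv (deriv m) t + G t * m t = 0) →
      m 0 = 0 → deriv m 0 = 1 → ∀ t ∈ Icc 0 b,
      |m t - f t| + |deriv m t - deriv f t| ≤ A * ∫ s in 0..b, |G s - K s| := by
  set I := ∫ s in 0..b, (1 + |K s|)
  refine ⟨exp (I + 1) * exp I, by positivity, fun G m hG hGK hm hmode hm0 hm0' t ht => ?_⟩
  have hb : 0 ≤ b := ht.1.trans ht.2
  have hM : ∀ s ∈ Icc 0 b, |m s| ≤ exp (I + 1) := fun s hs => by
    refine (abs_le_exp_integral_of_ode hG hm hmode hm0 hm0' s hs).trans (exp_le_exp.2 ?_)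
    have hK1 : Continuous fun s => 1 + |K s| := by fun_prop
    have hGK1 : Continuous fun s => |G s - K s| := by fun_prop
    calc ∫ s in 0..b, (1 + |G s|) ≤ ∫ s in 0..b, ((1 + |K s|) + |G s - K s|) :=
          integral_mono_on hb ((continuous_const.add hG.abs).intervalIntegrable _ _)
            ((hK1.add hGK1).intervalIntegrable _ _)
            fun s _ => by linarith [abs_sub_abs_le_abs_sub (G s) (K s)]
      _ ≤ I + 1 := by
          rw [integral_add (hK1.intervalIntegrable _ _) (hGK1.intervalIntegrable _ _)]
          linarith
  have := abs_sub_add_abs_deriv_sub_le_of_ode hK hG hf hm hfode hmode (hm0.trans hf0.symm)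
    (hm0'.trans hf0'.symm) hM t ht
  linarith

theorem exists_abs_div_sub_one_le (hK : Continuous K) (hf : ContDiff ℝ 2 f)
    (hfode : ∀ t ≥ (0:ℝ), deriv (deriv f) t + K t * f t = 0)
    (hf0 : f 0 = 0) (hf0' : deriv f 0 = 1) (hfpos : ∀ t > (0:ℝ), 0 < f t)
    (hfint : IntegrableOn (fun t => (f t ^ 2)⁻¹) (Ici 1)) {b : ℝ} (hb : 1 ≤ b) :
    ∃ C ≥ 0, ∀ G m : ℝ → ℝ, Continuous G → (∀ t ≥ b, G t = K t) →
      ∫ s in 0..b, |G s - K s| ≤ 1 → ContDiff ℝ 2 m →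
      (∀ t ≥ (0:ℝ), deriv (deriv m) t + G t * m t = 0) → m 0 = 0 → deriv m 0 = 1 →
      ∀ t ≥ 1, |m t / f t - 1| ≤ C * ∫ s in 0..b, |G s - K s| := by
  obtain ⟨A, hA0, hA⟩ := exists_abs_sub_add_abs_deriv_sub_le hK hf hfode hf0 hf0' b
  obtain ⟨x₀, hx₀, hmin⟩ :=
    isCompact_Icc.exists_isMinOn (nonempty_Icc.2 hb) hf.continuous.continuousOn
  have hμ : 0 < f x₀ := hfpos x₀ (zero_lt_one.trans_le hx₀.1)
  have hfb : 0 < f b := hμ.trans_le (hmin ⟨hb, le_rfl⟩)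
  set H := ∫ t in Ici 1, (f t ^ 2)⁻¹
  have hH : 0 ≤ H := setIntegral_nonneg measurableSet_Ici fun t _ => by positivity
  refine ⟨A / f x₀ + A * (f b + |deriv f b|) * H, by positivity,
    fun G m hG hGb hGK hm hmode hm0 hm0' t ht => ?_⟩
  set η := ∫ s in 0..b, |G s - K s|
  have hη : 0 ≤ η := integral_nonneg (by linarith) fun s _ => abs_nonneg _
  have hclose := hA G m hG hGK hm hmode hm0 hm0'
  have hnear : ∀ s ∈ Icc 1 b, |m s / f s - 1| ≤ A * η / f x₀ := fun s hs => by
    have hfs : f x₀ ≤ f s := hmin hs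
    rw [div_sub_one (hμ.trans_le hfs).ne', abs_div, abs_of_pos (hμ.trans_le hfs)]
    exact div_le_div₀ (by positivity) ((le_add_of_nonneg_right (abs_nonneg _)).trans
      (hclose s ⟨by linarith [hs.1], hs.2⟩)) hμ hfs
  rcases le_total t b with htb | hbt
  · refine (hnear t ⟨ht, htb⟩).trans ?_
    rw [add_mul, mul_div_right_comm]
    exact le_add_of_nonneg_right (by positivity)
  have hrep := div_eq_add_wronskian_mul_integral (P := K)
    (fun s => (hm.differentiable two_ne_zero s).hasDerivAt) hm.hasDerivAt_deriv_two
    (fun s => (hf.differentiable two_ne_zero s).hasDerivAt) hf.hasDerivAt_deriv_two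
    (fun s hs => by rw [← hGb s hs]; linarith [hmode s (by linarith)])
    (fun s hs => by linarith [hfode s (by linarith)])
    (fun s hs => (hfpos s (by linarith [hs.1])).ne') hbt
  have hW : |deriv m b * f b - m b * deriv f b| ≤ A * η * (f b + |deriv f b|) := by
    have hcb := hclose b ⟨by linarith, le_rfl⟩
    rw [show deriv m b * f b - m b * deriv f b =
      (deriv m b - deriv f b) * f b - (m b - f b) * deriv f b by ring]
    refine (abs_sub _ _).trans ?_
    rw [abs_mul, abs_mul, abs_of_pos hfb]
    nlinarith [abs_nonneg (m b - f b), abs_nonneg (deriv m b - deriv f b), abs_nonneg (deriv f b)]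
  have hI : |∫ s in b..t, (f s ^ 2)⁻¹| ≤ H := by
    rw [abs_of_nonneg (integral_nonneg hbt fun s _ => by positivity), integral_of_le hbt]
    exact setIntegral_mono_set hfint (ae_of_all _ fun s => by positivity)
      (show Ioc b t ⊆ Ici 1 from fun s hs => hb.trans hs.1.le).eventuallyLE
  rw [hrep, add_sub_right_comm]
  calc _ ≤ |m b / f b - 1| +
        |deriv m b * f b - m b * deriv f b| * |∫ s in b..t, (f s ^ 2)⁻¹| :=
        (abs_add_le _ _).trans_eq (by rw [abs_mul])
    _ ≤ A * η / f x₀ + A * η * (f b + |deriv f b|) * H :=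
        add_le_add (hnear b ⟨hb, le_rfl⟩) (mul_le_mul hW hI (abs_nonneg _) (by positivity))
    _ = (A / f x₀ + A * (f b + |deriv f b|) * H) * η := by ring

end

theorem stmt8 (K f : ℝ → ℝ)
    (hKc : Continuous K) (hf : ContDiff ℝ 2 f)
    (hfode : ∀ t ≥ (0:ℝ), deriv (deriv f) t + K t * f t = 0)
    (hf0 : f 0 = 0) (hf0' : deriv f 0 = 1)
    (hfpos : ∀ t > (0:ℝ), 0 < f t)
    (hfint : IntegrableOn (fun t => ((f t) ^ 2)⁻¹) (Ici (1:ℝ))) :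
    ∀ ε > (0:ℝ), ∀ a b : ℝ, 1 ≤ a → a < b →
      ∃ δ > (0:ℝ), ∀ G m : ℝ → ℝ, Continuous G →
        (∀ t, t ∉ Icc a b → G t = K t) →
        Real.sqrt (∫ t in Ici (0:ℝ), (G t - K t) ^ 2) < δ →
        ContDiff ℝ 2 m →
        (∀ t ≥ (0:ℝ), deriv (deriv m) t + G t * m t = 0) →
        m 0 = 0 → deriv m 0 = 1 →
        ∫ t in Ici (1:ℝ), |((m t) ^ 2)⁻¹ - ((f t) ^ 2)⁻¹| < ε := by
  intro ε hε a b ha hab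
  have hb : 1 ≤ b := ha.trans hab.le
  obtain ⟨C, hC0, hC⟩ := exists_abs_div_sub_one_le hKc hf hfode hf0 hf0' hfpos hfint hb
  set H := ∫ t in Ici (1:ℝ), (f t ^ 2)⁻¹
  have hH : 0 ≤ H := setIntegral_nonneg measurableSet_Ici fun t _ => by positivity
  set η := min (1 / 2) (ε / (10 * H + 1))
  have hη : 0 < η := lt_min (by norm_num) (by positivity)
  have hη2 : η ≤ 1 / 2 := min_le_left _ _
  refine ⟨η / ((b + 1) / 2 * (C + 1)), by positivity,
    fun G m hG hGK hδ hm hmode hm0 hm0' => ?_⟩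
  have hsupp : HasCompactSupport fun t => (G t - K t) ^ 2 :=
    HasCompactSupport.intro (isCompact_Icc (a := a) (b := b)) fun t ht => by simp [hGK t ht]
  have hL1 := intervalIntegral_abs_le_of_sqrt_integral_sq_lt (b := b) (hG.sub hKc)
    ((hG.sub hKc).pow 2 |>.integrable_of_hasCompactSupport hsupp).integrableOn (by linarith) hδ
  have hL1' : (C + 1) * ∫ s in 0..b, |G s - K s| ≤ η := by
    calc _ ≤ (C + 1) * ((b + 1) / 2 * (η / ((b + 1) / 2 * (C + 1)))) := by gcongr; exact hL1
      _ = η := by field_simp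
  have hI0 : 0 ≤ ∫ s in 0..b, |G s - K s| := integral_nonneg (by linarith) fun s _ => abs_nonneg _
  have hCη : C * ∫ s in 0..b, |G s - K s| ≤ η := by nlinarith
  calc _ ≤ 10 * (C * ∫ s in 0..b, |G s - K s|) * H :=
        integral_abs_inv_sq_sub_inv_sq_le hf.continuous hm.continuous hfint (hCη.trans hη2)
          (hC G m hG (eq_of_le_of_eq_off_Icc hG hKc hGK) (by nlinarith) hm hmode hm0 hm0')
    _ ≤ 10 * (ε / (10 * H + 1)) * H := by gcongr; exact hCη.trans (min_le_right _ _)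
    _ < ε := by
        rw [mul_comm 10, mul_assoc, div_mul_eq_mul_div, div_lt_iff₀ (by positivity)]
        nlinarith
end

section
/- Let m be the solution of m'' + K m = 0 on [0,∞) with m(0) = 0, m'(0) = 1, where K is continuous, K(t) ≤ 0 on [0,∞), and ∫_0^∞ t·K(t) dt > −∞. Then the surface of revolution M* = (ℝ², dt² + m(t)²dθ²) admits a finite total curvature; equivalently, ∫_0^∞ |K(t)| m(t) dt < ∞. -/
open MeasureTheory Set Real

/-!
As long as `m ≥ 0`, the equation reads `m'' = |K| m ≥ 0`; since `m'(0) = 1 > 0`, `m` can never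
become negative, so `m` is convex on `[0, ∞)`. With `m 0 = 0`, convexity gives `m t ≤ t m'(t)`,
hence `(m')' = |K| m ≤ t |K| m'`, and Grönwall bounds `m'` by `exp C` with `C := ∫₀^∞ t |K t| dt`.
Therefore `|K| m ≤ exp C · t |K|`, which is integrable.
-/

theorem le_mul_exp_integral_of_deriv_le_mul {g g' k : ℝ → ℝ} {a b : ℝ} (hab : a ≤ b)
    (hk : Continuous k) (hg : ∀ t ∈ Icc a b, HasDerivAt g (g' t) t)
    (hle : ∀ t ∈ Ioo a b, g' t ≤ k t * g t) :
    g b ≤ g a * exp (∫ s in a..b, k s) := by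
  set I : ℝ → ℝ := fun t => ∫ s in a..t, k s
  have hI : ∀ t, HasDerivAt I (k t) t := fun t => hk.integral_hasStrictDerivAt a t |>.hasDerivAt
  have hh : ∀ t ∈ Icc a b, HasDerivAt (fun t => g t * exp (-I t))
      ((g' t - k t * g t) * exp (-I t)) t := fun t ht =>
    ((hg t ht).fun_mul (hI t).fun_neg.exp).congr_deriv (by ring)
  have hanti : AntitoneOn (fun t => g t * exp (-I t)) (Icc a b) := by
    refine antitoneOn_of_deriv_nonpos (convex_Icc a b)
      (fun t ht => (hh t ht).continuousAt.continuousWithinAt) (fun t ht => ?_) (fun t ht => ?_)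
    all_goals rw [interior_Icc] at ht
    · exact (hh t (Ioo_subset_Icc_self ht)).differentiableAt.differentiableWithinAt
    · rw [(hh t (Ioo_subset_Icc_self ht)).deriv]
      exact mul_nonpos_of_nonpos_of_nonneg (by linarith [hle t ht]) (exp_pos _).le
  have key := hanti (left_mem_Icc.2 hab) (right_mem_Icc.2 hab) hab
  simp only [I, intervalIntegral.integral_same, neg_zero, exp_zero, mul_one] at key
  calc g b = g b * exp (-I b) * exp (I b) := by rw [mul_assoc, ← exp_add]; simp
    _ ≤ g a * exp (I b) := mul_le_mul_of_nonneg_right key (exp_pos _).le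

theorem ConvexOn.sub_le_mul_deriv {S : Set ℝ} {f : ℝ → ℝ} {x y : ℝ} (hf : ConvexOn ℝ S f)
    (hx : x ∈ S) (hy : y ∈ S) (hxy : x ≤ y) (hfd : DifferentiableAt ℝ f y) :
    f y - f x ≤ (y - x) * deriv f y := by
  rcases hxy.eq_or_lt with rfl | hlt
  · simp
  have := hf.slope_le_deriv hx hy hlt hfd
  rw [slope_def_field, div_le_iff₀ (sub_pos.2 hlt)] at this
  linarith

theorem convexOn_of_deriv_deriv_nonneg {D : Set ℝ} {f : ℝ → ℝ} (hD : Convex ℝ D)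
    (hf : Differentiable ℝ f) (hf' : Differentiable ℝ (deriv f))
    (hf'' : ∀ x ∈ interior D, 0 ≤ deriv (deriv f) x) : ConvexOn ℝ D f :=
  convexOn_of_deriv2_nonneg hD hf.continuous.continuousOn hf.differentiableOn
    hf'.differentiableOn (by simpa using hf'')

theorem nonneg_of_deriv_deriv_eq_mul {f q : ℝ → ℝ} (hf : Differentiable ℝ f)
    (hf' : Differentiable ℝ (deriv f)) (hq : ∀ t ≥ 0, 0 ≤ q t)
    (hode : ∀ t ≥ 0, deriv (deriv f) t = q t * f t) (h0 : f 0 = 0) (h0' : 0 < deriv f 0)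
    {t : ℝ} (ht : 0 ≤ t) : 0 ≤ f t := by
  -- `τ` is the first time `f` turns negative; `f` is convex on `[0, τ]`, so `f τ ≥ τ f'(0) > 0`.
  by_contra! hneg
  set A := {t : ℝ | 0 ≤ t ∧ f t < 0}
  have hA : A.Nonempty := ⟨t, ht, hneg⟩
  have hAbdd : BddBelow A := ⟨0, fun s hs => hs.1⟩
  set τ := sInf A
  obtain ⟨ε, hε, hpos⟩ : ∃ ε > 0, ∀ s ∈ Ioo 0 ε, 0 < f s := by
    have := eventually_nhdsWithin_sign_eq_of_deriv_pos h0' h0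
    obtain ⟨ε, hε, hball⟩ := Metric.eventually_nhds_iff.1 this
    refine ⟨ε, hε, fun s hs => ?_⟩
    have := hball (show dist s 0 < ε by rw [Real.dist_eq, sub_zero, abs_of_pos hs.1]; exact hs.2)
    rw [sub_zero, sign_pos hs.1] at this
    exact sign_eq_one_iff.1 this
  have hτ : 0 < τ := hε.trans_le <| le_csInf hA fun s ⟨hs0, hs⟩ => by
    by_contra! hsε
    exact hs.not_ge (hpos s ⟨hs0.lt_of_ne (by rintro rfl; simp [h0] at hs), hsε⟩).le
  have hfτ : f τ ≤ 0 := closure_minimal (fun s hs => hs.2.le)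
    (isClosed_le hf.continuous continuous_const) (csInf_mem_closure hA hAbdd)
  have hconv : ConvexOn ℝ (Icc 0 τ) f := by
    refine convexOn_of_deriv_deriv_nonneg (convex_Icc 0 τ) hf hf' fun s hs => ?_
    rw [interior_Icc] at hs
    rw [hode s hs.1.le]
    exact mul_nonneg (hq s hs.1.le) (not_lt.1 fun h => notMem_of_lt_csInf hs.2 hAbdd ⟨hs.1.le, h⟩)
  have := hconv.deriv_le_slope (left_mem_Icc.2 hτ.le) (right_mem_Icc.2 hτ.le) hτ (hf 0)
  rw [slope_def_field, le_div_iff₀ (by simpa using hτ)] at this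
  nlinarith

theorem stmt9 (K m : ℝ → ℝ)
    (hKc : Continuous K) (hKneg : ∀ t ≥ (0:ℝ), K t ≤ 0)
    (hm : ContDiff ℝ 2 m)
    (hmode : ∀ t ≥ (0:ℝ), deriv (deriv m) t + K t * m t = 0)
    (hm0 : m 0 = 0) (hm0' : deriv m 0 = 1)
    (hKint : IntegrableOn (fun t => t * |K t|) (Ici (0:ℝ))) :
    IntegrableOn (fun t => |K t| * m t) (Ici (0:ℝ)) := by
  have hm1 : Differentiable ℝ m := hm.differentiable two_ne_zero
  have hm2 : Differentiable ℝ (deriv m) := hm.differentiable_deriv_two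
  have hode : ∀ t ≥ (0:ℝ), deriv (deriv m) t = |K t| * m t := fun t ht => by
    rw [abs_of_nonpos (hKneg t ht)]
    linarith [hmode t ht]
  have hm_nonneg : ∀ t ≥ (0:ℝ), 0 ≤ m t := fun t ht =>
    nonneg_of_deriv_deriv_eq_mul hm1 hm2 (fun _ _ => abs_nonneg _) hode hm0 (by simp [hm0']) ht
  have hconv : ConvexOn ℝ (Ici 0) m :=
    convexOn_of_deriv_deriv_nonneg (convex_Ici 0) hm1 hm2 fun t ht => by
      rw [interior_Ici] at ht
      rw [hode t ht.le]
      exact mul_nonneg (abs_nonneg _) (hm_nonneg t ht.le)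
  have hm_le : ∀ t ≥ (0:ℝ), m t ≤ t * deriv m t := fun t ht => by
    simpa [hm0] using hconv.sub_le_mul_deriv self_mem_Ici ht ht (hm1 t)
  set C := ∫ t in Ici 0, t * |K t|
  have hderiv_le : ∀ t ≥ (0:ℝ), deriv m t ≤ exp C := fun t ht => calc
    deriv m t ≤ deriv m 0 * exp (∫ s in 0..t, s * |K s|) := by
      refine le_mul_exp_integral_of_deriv_le_mul ht (by fun_prop)
        (fun s _ => (hm2 s).hasDerivAt) fun s hs => ?_
      rw [hode s hs.1.le, mul_comm s, mul_assoc]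
      exact mul_le_mul_of_nonneg_left (hm_le s hs.1.le) (abs_nonneg _)
    _ ≤ exp C := by
      rw [hm0', one_mul, exp_le_exp, intervalIntegral.integral_of_le ht]
      refine setIntegral_mono_set hKint ?_ (LE.le.eventuallyLE fun _ hs => hs.1.le)
      filter_upwards [ae_restrict_mem measurableSet_Ici] with s hs
      exact mul_nonneg hs (abs_nonneg _)
  refine (hKint.const_mul (exp C)).mono' (hKc.abs.mul hm1.continuous).aestronglyMeasurable ?_
  filter_upwards [ae_restrict_mem measurableSet_Ici] with t ht
  rw [norm_of_nonneg (mul_nonneg (abs_nonneg _) (hm_nonneg t ht))]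
  calc |K t| * m t ≤ |K t| * (t * exp C) := by
        gcongr
        exact (hm_le t ht).trans (mul_le_mul_of_nonneg_left (hderiv_le t ht) ht)
    _ = exp C * (t * |K t|) := by ring
end

section
/- Let f solve f'' + G f = 0 on [0,∞) with f(0) = 0, f'(0) = 1 and f > 0 on (0,∞), such that the surface (ℝ², dt² + f²dθ²) has finite total curvature c < 2π. Then lim_{t→∞} f(t)/t = lim_{t→∞} f'(t) = (2π − c)/(2π) > 0, and in particular there exists α > 0 with f(t)/t > 1/α on (0,∞), and ∫_1^∞ f(t)^(−2) dt < ∞. -/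
/-!
The ODE gives `f' t = 1 - ∫₀ᵗ G f`, so integrability of `G f` makes `f'` converge to
`1 - c / 2π`, and the mean value theorem transfers this limit to `f t / t`. The quotient
`f t / t` is positive and continuous on `(0, ∞)` with positive limits at both ends (`1` at `0⁺`
since `f 0 = 0`, `f' 0 = 1`), hence bounded below by some `m > 0`; then `f⁻² ≤ m⁻² t⁻²`.
-/

open MeasureTheory Set Filter Real Asymptotics Topology

theorem isLittleO_id_of_tendsto_deriv_zero {E : Type*} [NormedAddCommGroup E] [NormedSpace ℝ E]
    {g : ℝ → E} (hg : ∀ᶠ x in atTop, DifferentiableAt ℝ g x)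
    (hg' : Tendsto (deriv g) atTop (𝓝 0)) : g =o[atTop] id := by
  refine isLittleO_iff.2 fun ε hε => ?_
  obtain ⟨T, hT⟩ := eventually_atTop.1 <| (eventually_ge_atTop 0).and <|
    hg.and (hg'.norm.eventually (eventually_le_nhds (b := ε / 2) (by simpa using half_pos hε)))
  filter_upwards [eventually_ge_atTop T, eventually_ge_atTop (2 * ‖g T‖ / ε)] with x hxT hxg
  have hT0 : 0 ≤ T := (hT T le_rfl).1
  have hmvt : ‖g x - g T‖ ≤ ε / 2 * ‖x - T‖ :=
    (convex_Ici T).norm_image_sub_le_of_norm_deriv_le (fun y hy => (hT y hy).2.1)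
      (fun y hy => by simpa using (hT y hy).2.2) self_mem_Ici hxT
  have hgT : ‖g T‖ ≤ ε / 2 * x := by
    rw [div_le_iff₀ hε] at hxg; linarith
  rw [Real.norm_of_nonneg (sub_nonneg.2 hxT)] at hmvt
  calc ‖g x‖ ≤ ‖g T‖ + ‖g x - g T‖ := norm_le_norm_add_norm_sub' _ _
    _ ≤ ε / 2 * x + ε / 2 * (x - T) := add_le_add hgT hmvt
    _ ≤ ε * ‖id x‖ := by
      rw [id, Real.norm_of_nonneg (hT0.trans hxT)]; nlinarith

theorem tendsto_div_atTop_of_tendsto_deriv {f : ℝ → ℝ} {L : ℝ}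
    (hf : ∀ᶠ x in atTop, DifferentiableAt ℝ f x) (hf' : Tendsto (deriv f) atTop (𝓝 L)) :
    Tendsto (fun t => f t / t) atTop (𝓝 L) := by
  set g : ℝ → ℝ := fun t => f t - L * t
  have hg : ∀ᶠ x in atTop, DifferentiableAt ℝ g x := by
    filter_upwards [hf] with x hx using hx.sub (differentiableAt_id.const_mul L)
  have hg' : Tendsto (deriv g) atTop (𝓝 0) := by
    rw [← sub_self L]
    refine (hf'.sub_const L).congr' ?_
    filter_upwards [hf] with x hx
    exact (((hx.hasDerivAt).sub ((hasDerivAt_id x).const_mul L)).deriv.trans (by simp)).symm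
  have := (isLittleO_id_of_tendsto_deriv_zero hg hg').tendsto_div_nhds_zero.add_const L
  rw [zero_add] at this
  refine this.congr' ?_
  filter_upwards [eventually_gt_atTop 0] with t ht
  simp only [g, id]
  field_simp
  ring

theorem tendsto_add_integral_Ioi_of_hasDerivAt {E : Type*} [NormedAddCommGroup E]
    [NormedSpace ℝ E] [CompleteSpace E] {u u' : ℝ → E} {a : ℝ}
    (hderiv : ∀ x ∈ Ici a, HasDerivAt u (u' x) x) (hint : IntegrableOn u' (Ioi a)) :
    Tendsto u atTop (𝓝 (u a + ∫ x in Ioi a, u' x)) := by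
  have hlim := tendsto_limUnder_of_hasDerivAt_of_integrableOn_Ioi
    (fun x hx => hderiv x (mem_Ici_of_Ioi hx)) hint
  rwa [integral_Ioi_of_hasDerivAt_of_tendsto' hderiv hint hlim, add_sub_cancel]

theorem tendsto_deriv_atTop_of_deriv_deriv_add_mul_eq_zero {G f : ℝ → ℝ} {a : ℝ}
    (hf : ContDiff ℝ 2 f) (hode : ∀ t ≥ a, deriv (deriv f) t + G t * f t = 0)
    (hint : IntegrableOn (fun t => G t * f t) (Ioi a)) :
    Tendsto (deriv f) atTop (𝓝 (deriv f a - ∫ t in Ioi a, G t * f t)) := by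
  have hddf : Differentiable ℝ (deriv f) := (hf.iterate_deriv' 1 1).differentiable one_ne_zero
  rw [sub_eq_add_neg, ← integral_neg]
  refine tendsto_add_integral_Ioi_of_hasDerivAt (fun t ht => ?_) hint.neg
  rw [← eq_neg_of_add_eq_zero_left (hode t ht)]
  exact (hddf t).hasDerivAt

theorem exists_pos_lt_of_continuousOn_Ioi {g : ℝ → ℝ} {a b : ℝ}
    (hg : ContinuousOn g (Ioi 0)) (hpos : ∀ t > 0, 0 < g t)
    (h0 : Tendsto g (𝓝[>] 0) (𝓝 a)) (ha : 0 < a)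
    (htop : Tendsto g atTop (𝓝 b)) (hb : 0 < b) :
    ∃ m > 0, ∀ t > 0, m < g t := by
  obtain ⟨δ, hδ, hnear⟩ := mem_nhdsGT_iff_exists_Ioo_subset.1 <|
    h0.eventually (eventually_gt_nhds (half_lt_self ha))
  obtain ⟨M, hfar⟩ := eventually_atTop.1 <| htop.eventually (eventually_gt_nhds (half_lt_self hb))
  have hsub : Icc δ M ⊆ Ioi 0 := fun t ht => hδ.trans_le ht.1
  obtain ⟨m, hm, hmid⟩ :=
    isCompact_Icc.exists_forall_le' (hg.mono hsub) fun t ht => hpos t (hsub ht)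
  refine ⟨min (min (a / 2) (b / 2)) (m / 2), by positivity, fun t ht => ?_⟩
  rcases lt_or_ge t δ with htδ | htδ
  · exact (min_le_left _ _).trans_lt <| (min_le_left _ _).trans_lt (hnear ⟨ht, htδ⟩)
  rcases le_or_gt t M with htM | htM
  · exact (min_le_right _ _).trans_lt <| (half_lt_self hm).trans_le (hmid t ⟨htδ, htM⟩)
  · exact (min_le_left _ _).trans_lt <| (min_le_right _ _).trans_lt (hfar t htM.le)

theorem integrableOn_inv_sq_Ici_of_linear_le {f : ℝ → ℝ} {a m : ℝ} (ha : 0 < a) (hm : 0 < m)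
    (hf : ContinuousOn f (Ici a)) (hle : ∀ t ≥ a, m * t ≤ f t) :
    IntegrableOn (fun t => (f t ^ 2)⁻¹) (Ici a) := by
  have hmajorant : IntegrableOn (fun t : ℝ => (m ^ 2)⁻¹ * t ^ (-2 : ℝ)) (Ici a) :=
    (integrableOn_Ici_iff_integrableOn_Ioi).2 <|
      (integrableOn_Ioi_rpow_of_lt (by norm_num) ha).const_mul _
  have hfpos : ∀ t ∈ Ici a, 0 < f t := fun t ht =>
    (mul_pos hm (ha.trans_le ht)).trans_le (hle t ht)
  have hmeas := (hf.pow 2).inv₀ fun t ht => (pow_pos (hfpos t ht) 2).ne'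
  refine hmajorant.mono' (hmeas.aestronglyMeasurable measurableSet_Ici) ?_
  filter_upwards [ae_restrict_mem measurableSet_Ici] with t (ht : a ≤ t)
  have ht0 : 0 < t := ha.trans_le ht
  have hmt : 0 < m * t := mul_pos hm ht0
  rw [Real.norm_of_nonneg (by positivity), rpow_neg ht0.le, rpow_two, ← mul_inv, ← mul_pow]
  exact inv_anti₀ (by positivity) (pow_le_pow_left₀ hmt.le (hle t ht) 2)

theorem stmt10 (G f : ℝ → ℝ) (c : ℝ)
    (hGc : Continuous G) (hf : ContDiff ℝ 2 f)
    (hfode : ∀ t ≥ (0:ℝ), deriv (deriv f) t + G t * f t = 0)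
    (hf0 : f 0 = 0) (hf0' : deriv f 0 = 1)
    (hfpos : ∀ t > (0:ℝ), 0 < f t)
    (hint : IntegrableOn (fun t => |G t| * f t) (Ici (0:ℝ)))
    (hc : c = 2 * π * ∫ t in Ici (0:ℝ), G t * f t)
    (hc2 : c < 2 * π) :
    Tendsto (fun t => f t / t) atTop (nhds ((2 * π - c) / (2 * π))) ∧
    Tendsto (deriv f) atTop (nhds ((2 * π - c) / (2 * π))) ∧
    0 < (2 * π - c) / (2 * π) ∧
    (∃ α > (0:ℝ), ∀ t > (0:ℝ), f t / t > 1 / α) ∧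
    IntegrableOn (fun t => ((f t) ^ 2)⁻¹) (Ici (1:ℝ)) := by
  have hdf : Differentiable ℝ f := hf.differentiable two_ne_zero
  have hGf : IntegrableOn (fun t => G t * f t) (Ioi 0) := by
    refine (hint.mono_set Ioi_subset_Ici_self).mono'
      (hGc.mul hdf.continuous).aestronglyMeasurable ?_
    filter_upwards [ae_restrict_mem measurableSet_Ioi] with t (ht : 0 < t)
    rw [norm_mul, Real.norm_eq_abs, Real.norm_of_nonneg (hfpos t ht).le]
  have hL : (2 * π - c) / (2 * π) = deriv f 0 - ∫ t in Ioi 0, G t * f t := by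
    rw [hc, ← integral_Ici_eq_integral_Ioi, hf0']
    field_simp
  have hderiv : Tendsto (deriv f) atTop (𝓝 ((2 * π - c) / (2 * π))) :=
    hL ▸ tendsto_deriv_atTop_of_deriv_deriv_add_mul_eq_zero hf hfode hGf
  have hratio := tendsto_div_atTop_of_tendsto_deriv (.of_forall hdf) hderiv
  have hslope : Tendsto (fun t => f t / t) (𝓝[>] 0) (𝓝 1) := by
    simpa [hf0, hf0', div_eq_inv_mul] using (hdf 0).hasDerivAt.tendsto_slope_zero_right
  have hpos : 0 < (2 * π - c) / (2 * π) := div_pos (by linarith) (by positivity)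
  obtain ⟨m, hm, hmf⟩ := exists_pos_lt_of_continuousOn_Ioi (g := fun t => f t / t)
    (hdf.continuous.continuousOn.div continuousOn_id fun t ht => ht.ne')
    (fun t ht => div_pos (hfpos t ht) ht) hslope one_pos hratio hpos
  refine ⟨hratio, hderiv, hpos, ⟨m⁻¹, inv_pos.2 hm, fun t ht => by simpa using hmf t ht⟩,
    integrableOn_inv_sq_Ici_of_linear_le one_pos hm hdf.continuous.continuousOn fun t ht => ?_⟩
  have ht0 : (0:ℝ) < t := one_pos.trans_le ht
  exact ((lt_div_iff₀ ht0).1 (hmf t ht0)).le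
end

section
/- (Model Lemma II) Let f solve f'' + G f = 0 with f(0) = 0, f'(0) = 1, f > 0 on (0,∞), and suppose the model surface (ℝ², dt² + f²dθ²) has finite total curvature c < 2π (i.e. ∫_0^∞ |G| f dt < ∞ and 2π∫_0^∞ G f dt = c < 2π). Let G₋ := min{G, 0}. Then ∫_0^∞ t·G₋(t) dt > −∞, and consequently the solution m of m'' + G₋ m = 0 with m(0) = 0, m'(0) = 1 defines a model surface of finite total curvature. -/
open MeasureTheory Set Real Filter Topology

/-!
Since `c < 2π` means `∫ G f < 1`, the ODE gives `f' t = 1 - ∫₀ᵗ G f → 1 - ∫ G f > 0`.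
Together with `f' 0 = 1` and `f > 0` this yields `f t ≥ α t` for some `α > 0`, so
`∫ t |G₋| ≤ α⁻¹ ∫ |G| f < ∞`.

For `m'' = |G₋| m`, a first-exit argument shows `m' > 0`, so `m ≥ 0` and `m'' ≥ 0`; convexity
gives `m ≤ t m'`, hence `m'' ≤ t |G₋| m'`. Gronwall then bounds `m' ≤ exp ∫ t |G₋| =: C`, so
`|G₋| m ≤ C t |G₋|` is integrable.
-/

theorem tendsto_deriv_atTop_of_ode {h p : ℝ → ℝ} (hh : ContDiff ℝ 2 h)
    (ode : ∀ t ≥ (0:ℝ), deriv (deriv h) t + p t * h t = 0)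
    (hint : IntegrableOn (fun t => p t * h t) (Ioi 0)) :
    Tendsto (deriv h) atTop (𝓝 (deriv h 0 - ∫ t in Ioi 0, p t * h t)) := by
  have hh' : ContDiff ℝ 1 (deriv h) := hh.deriv'
  have ftc : ∀ t ≥ (0:ℝ), deriv h t = deriv h 0 - ∫ s in (0:ℝ)..t, p s * h s := by
    intro t ht
    have hint2 : ∫ s in (0:ℝ)..t, deriv (deriv h) s = deriv h t - deriv h 0 :=
      intervalIntegral.integral_deriv_eq_sub
        (fun x _ => (hh'.differentiable one_ne_zero).differentiableAt)
        ((hh'.continuous_deriv le_rfl).intervalIntegrable 0 t)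
    have hode : ∫ s in (0:ℝ)..t, deriv (deriv h) s = -∫ s in (0:ℝ)..t, p s * h s := by
      rw [← intervalIntegral.integral_neg]
      refine intervalIntegral.integral_congr fun s hs => ?_
      rw [uIcc_of_le ht] at hs
      linarith [ode s hs.1]
    linarith
  refine (tendsto_const_nhds.sub
    (intervalIntegral_tendsto_integral_Ioi 0 hint tendsto_id)).congr' ?_
  filter_upwards [eventually_ge_atTop 0] with t ht
  exact (ftc t ht).symm

theorem eventually_mul_lt_of_hasDerivAt_zero {f : ℝ → ℝ} {a b : ℝ} (hf : HasDerivAt f a 0)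
    (hf0 : f 0 = 0) (hb : b < a) : ∀ᶠ t in 𝓝[>] 0, b * t < f t := by
  have hslope : Tendsto (slope f 0) (𝓝[>] 0) (𝓝 a) :=
    (hasDerivAt_iff_tendsto_slope.mp hf).mono_left (nhdsWithin_mono _ fun t ht => ne_of_gt ht)
  filter_upwards [hslope.eventually (eventually_gt_nhds hb), self_mem_nhdsWithin] with t hbt ht
  rwa [slope_def_field, hf0, sub_zero, sub_zero, lt_div_iff₀ ht] at hbt

theorem eventually_mul_le_of_tendsto_deriv_atTop {f : ℝ → ℝ} {a b : ℝ}
    (hf : Differentiable ℝ f) (hf' : Tendsto (deriv f) atTop (𝓝 a)) (hb : b < a) :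
    ∀ᶠ t in atTop, b * t ≤ f t := by
  obtain ⟨T, hT⟩ := (hf'.eventually (eventually_ge_nhds (add_lt_of_lt_sub_left
    (show (a - b) / 2 < a - b by linarith)))).exists_forall_of_atTop
  set c := b + (a - b) / 2 with hc
  have hgrowth : ∀ t ≥ T, c * (t - T) ≤ f t - f T := fun t ht =>
    (convex_Ici T).mul_sub_le_image_sub_of_le_deriv hf.continuous.continuousOn
      hf.differentiableOn (fun x hx => hT x (interior_subset hx)) T self_mem_Ici t ht ht
  filter_upwards [eventually_ge_atTop T, eventually_ge_atTop ((c * T - f T) / ((a - b) / 2))]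
    with t hTt ht
  have := hgrowth t hTt
  rw [div_le_iff₀ (by linarith)] at ht
  have hct : c * t = b * t + t * ((a - b) / 2) := by rw [hc]; ring
  linarith

theorem exists_pos_mul_le_of_eventually {f : ℝ → ℝ} {a b : ℝ} (hf : Continuous f)
    (hpos : ∀ t > 0, 0 < f t) (ha : 0 < a) (hb : 0 < b)
    (hzero : ∀ᶠ t in 𝓝[>] 0, a * t ≤ f t) (htop : ∀ᶠ t in atTop, b * t ≤ f t) :
    ∃ α > 0, ∀ t > 0, α * t ≤ f t := by
  obtain ⟨r, hr, hr'⟩ := mem_nhdsGT_iff_exists_Ioo_subset.mp hzero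
  obtain ⟨T, hT⟩ := htop.exists_forall_of_atTop
  set T' := max T r
  have hT' : 0 < T' := lt_max_of_lt_right hr
  obtain ⟨x, hx, hxmin⟩ := isCompact_Icc.exists_isMinOn (nonempty_Icc.mpr (le_max_right T r))
    hf.continuousOn
  have hfx : 0 < f x := hpos x (hr.trans_le hx.1)
  refine ⟨min a (min b (f x / T')), by positivity, fun t ht => ?_⟩
  rcases lt_or_ge t r with htr | hrt
  · exact (mul_le_mul_of_nonneg_right (min_le_left _ _) ht.le).trans (hr' ⟨ht, htr⟩)
  rcases le_or_gt T' t with hTt | htT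
  · exact (mul_le_mul_of_nonneg_right ((min_le_right _ _).trans (min_le_left _ _)) ht.le).trans
      (hT t ((le_max_left T r).trans hTt))
  calc min a (min b (f x / T')) * t ≤ f x / T' * T' := by
        gcongr
        exact (min_le_right _ _).trans (min_le_right _ _)
    _ = f x := div_mul_cancel₀ _ hT'.ne'
    _ ≤ f t := hxmin ⟨hrt, htT.le⟩

theorem integrableOn_mul_min_zero_of_mul_le {G f : ℝ → ℝ} {α : ℝ} (hG : Continuous G)
    (hα : 0 < α) (hf : ∀ t > 0, α * t ≤ f t)
    (hint : IntegrableOn (fun t => |G t| * f t) (Ioi 0)) :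
    IntegrableOn (fun t => t * min (G t) 0) (Ioi 0) := by
  refine (hint.const_mul α⁻¹).mono'
    (continuous_id.mul (hG.min continuous_const)).aestronglyMeasurable.restrict ?_
  filter_upwards [ae_restrict_mem measurableSet_Ioi] with t ht
  have hGt : |min (G t) 0| ≤ |G t| := by simpa using abs_min_le_max_abs_abs (a := G t) (b := 0)
  calc ‖t * min (G t) 0‖ = t * |min (G t) 0| := by
        rw [norm_mul, Real.norm_of_nonneg (le_of_lt ht), Real.norm_eq_abs]
    _ ≤ α⁻¹ * f t * |G t| := by
        have ht' : t ≤ α⁻¹ * f t := (le_inv_mul_iff₀ hα).mpr (hf t ht)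
        exact mul_le_mul ht' hGt (abs_nonneg _) ((le_of_lt ht).trans ht')
    _ = α⁻¹ * (|G t| * f t) := by ring

section NonposPotential

variable {q m : ℝ → ℝ} (hm : ContDiff ℝ 2 m) (hq : ∀ t ≥ (0:ℝ), q t ≤ 0)
  (ode : ∀ t ≥ (0:ℝ), deriv (deriv m) t + q t * m t = 0)
  (hm0 : m 0 = 0) (hm0' : deriv m 0 = 1)
include hm hq ode hm0 hm0'

theorem deriv_pos_of_ode_of_nonpos : ∀ t ≥ (0:ℝ), 0 < deriv m t := by
  have hm' : ContDiff ℝ 1 (deriv m) := hm.deriv'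
  by_contra! hneg
  set Z := Ici 0 ∩ deriv m ⁻¹' Iic 0
  have hZ : IsClosed Z := isClosed_Ici.inter (isClosed_Iic.preimage hm'.continuous)
  have ht₀ : sInf Z ∈ Z := hZ.csInf_mem hneg ⟨0, fun _ ht => ht.1⟩
  set t₀ := sInf Z
  have hpos : ∀ t ∈ Ioo 0 t₀, 0 ≤ deriv m t := fun t ht => by
    by_contra! h
    exact notMem_of_lt_csInf ht.2 ⟨0, fun _ hs => hs.1⟩ ⟨ht.1.le, h.le⟩
  have hm_nonneg : ∀ t ∈ Icc 0 t₀, 0 ≤ m t := fun t ht => by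
    have hmono : MonotoneOn m (Icc 0 t₀) := monotoneOn_of_deriv_nonneg (convex_Icc 0 t₀)
      hm.continuous.continuousOn (hm.differentiable (by norm_num)).differentiableOn
      (by simpa only [interior_Icc] using hpos)
    simpa only [hm0] using hmono ⟨le_rfl, ht.1.trans ht.2⟩ ht ht.1
  have hm'_mono : MonotoneOn (deriv m) (Icc 0 t₀) := by
    refine monotoneOn_of_deriv_nonneg (convex_Icc 0 t₀) hm'.continuous.continuousOn
      (hm'.differentiable one_ne_zero).differentiableOn fun t ht => ?_
    rw [interior_Icc] at ht
    nlinarith [ode t ht.1.le, hq t ht.1.le, hm_nonneg t (Ioo_subset_Icc_self ht)]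
  have := hm'_mono ⟨le_rfl, ht₀.1⟩ ⟨ht₀.1, le_rfl⟩ ht₀.1
  linarith [show deriv m t₀ ≤ 0 from ht₀.2]

theorem nonneg_of_ode_of_nonpos : ∀ t ≥ (0:ℝ), 0 ≤ m t := by
  intro t ht
  have hmono : MonotoneOn m (Ici 0) := monotoneOn_of_deriv_nonneg (convex_Ici 0)
    hm.continuous.continuousOn (hm.differentiable (by norm_num)).differentiableOn
    fun s hs => (deriv_pos_of_ode_of_nonpos hm hq ode hm0 hm0' s (interior_subset hs)).le
  simpa only [hm0] using hmono self_mem_Ici ht ht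

theorem le_mul_deriv_of_ode_of_nonpos : ∀ t ≥ (0:ℝ), m t ≤ t * deriv m t := by
  have hm' : ContDiff ℝ 1 (deriv m) := hm.deriv'
  have hmd : Differentiable ℝ m := hm.differentiable (by norm_num)
  have hm'd : Differentiable ℝ (deriv m) := hm'.differentiable one_ne_zero
  have hmono : MonotoneOn (fun s => s * deriv m s - m s) (Ici 0) := by
    refine monotoneOn_of_deriv_nonneg (convex_Ici 0)
      ((continuous_id.mul hm'.continuous).sub hm.continuous).continuousOn
      (differentiable_id.mul hm'd |>.sub hmd).differentiableOn fun s hs => ?_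
    rw [interior_Ici] at hs
    have hds : HasDerivAt (fun s => s * deriv m s - m s)
        (1 * deriv m s + s * deriv (deriv m) s - deriv m s) s :=
      ((hasDerivAt_id s).mul (hm'd s).hasDerivAt).sub (hmd s).hasDerivAt
    have hm'' : 0 ≤ deriv (deriv m) s := by
      nlinarith [ode s hs.le, hq s hs.le, nonneg_of_ode_of_nonpos hm hq ode hm0 hm0' s hs.le]
    rw [hds.deriv]
    nlinarith [mem_Ioi.mp hs]
  intro t ht
  simpa [hm0] using hmono self_mem_Ici ht ht

theorem deriv_le_exp_integral_of_ode_of_nonpos (hqc : Continuous q) :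
    ∀ t ≥ (0:ℝ), deriv m t ≤ exp (∫ s in (0:ℝ)..t, s * -q s) := by
  have hm'd : Differentiable ℝ (deriv m) := hm.deriv'.differentiable one_ne_zero
  set A := fun t => ∫ s in (0:ℝ)..t, s * -q s
  have hA : ∀ t, HasDerivAt A (t * -q t) t := fun t =>
    ((continuous_id.mul hqc.neg).integral_hasStrictDerivAt 0 t).hasDerivAt
  have hφ : ∀ t, HasDerivAt (fun s => deriv m s * exp (-A s))
      (deriv (deriv m) t * exp (-A t) + deriv m t * (exp (-A t) * -(t * -q t))) t :=
    fun t => (hm'd t).hasDerivAt.mul (hA t).neg.exp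
  have hanti : AntitoneOn (fun s => deriv m s * exp (-A s)) (Ici 0) := by
    refine antitoneOn_of_deriv_nonpos (convex_Ici 0)
      (continuous_iff_continuousAt.mpr fun t => (hφ t).continuousAt).continuousOn
      (fun t _ => (hφ t).differentiableAt.differentiableWithinAt) fun t ht => ?_
    rw [interior_Ici] at ht
    rw [(hφ t).deriv]
    have hm'' : deriv (deriv m) t ≤ t * -q t * deriv m t := by
      nlinarith [ode t ht.le, hq t ht.le, le_mul_deriv_of_ode_of_nonpos hm hq ode hm0 hm0' t ht.le]
    nlinarith [exp_pos (-A t)]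
  intro t ht
  have h := hanti self_mem_Ici ht ht
  simp only [A, intervalIntegral.integral_same, neg_zero, exp_zero, hm0', mul_one] at h
  rwa [exp_neg, ← div_eq_mul_inv, div_le_one (exp_pos _)] at h

theorem le_mul_exp_integral_of_ode_of_nonpos (hqc : Continuous q)
    (hint : IntegrableOn (fun s => s * -q s) (Ioi 0)) :
    ∀ t ≥ (0:ℝ), m t ≤ t * exp (∫ s in Ioi 0, s * -q s) := by
  intro t ht
  have hA : ∫ s in (0:ℝ)..t, s * -q s ≤ ∫ s in Ioi 0, s * -q s := by
    rw [intervalIntegral.integral_of_le ht]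
    refine setIntegral_mono_set hint ?_ Ioc_subset_Ioi_self.eventuallyLE
    filter_upwards [ae_restrict_mem measurableSet_Ioi] with s hs
    exact mul_nonneg (le_of_lt hs) (neg_nonneg.mpr (hq s (le_of_lt hs)))
  calc m t ≤ t * deriv m t := le_mul_deriv_of_ode_of_nonpos hm hq ode hm0 hm0' t ht
    _ ≤ t * exp (∫ s in Ioi 0, s * -q s) := by
      gcongr
      exact (deriv_le_exp_integral_of_ode_of_nonpos hm hq ode hm0 hm0' hqc t ht).trans
        (exp_le_exp.mpr hA)

theorem integrableOn_abs_mul_of_ode_of_nonpos (hqc : Continuous q)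
    (hint : IntegrableOn (fun s => s * -q s) (Ioi 0)) :
    IntegrableOn (fun t => |q t| * m t) (Ioi 0) := by
  refine (hint.const_mul (exp (∫ s in Ioi 0, s * -q s))).mono'
    (hqc.abs.mul hm.continuous).aestronglyMeasurable.restrict ?_
  filter_upwards [ae_restrict_mem measurableSet_Ioi] with t ht
  have ht0 : (0:ℝ) ≤ t := le_of_lt ht
  rw [norm_mul, norm_abs_eq_norm, norm_of_nonpos (hq t ht0),
    Real.norm_of_nonneg (nonneg_of_ode_of_nonpos hm hq ode hm0 hm0' t ht0)]
  calc -q t * m t ≤ -q t * (t * exp (∫ s in Ioi 0, s * -q s)) :=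
        mul_le_mul_of_nonneg_left
          (le_mul_exp_integral_of_ode_of_nonpos hm hq ode hm0 hm0' hqc hint t ht0)
          (neg_nonneg.mpr (hq t ht0))
    _ = exp (∫ s in Ioi 0, s * -q s) * (t * -q t) := by ring

end NonposPotential

theorem stmt11 (G f : ℝ → ℝ) (c : ℝ)
    (hGc : Continuous G) (hf : ContDiff ℝ 2 f)
    (hfode : ∀ t ≥ (0:ℝ), deriv (deriv f) t + G t * f t = 0)
    (hf0 : f 0 = 0) (hf0' : deriv f 0 = 1)
    (hfpos : ∀ t > (0:ℝ), 0 < f t)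
    (hint : IntegrableOn (fun t => |G t| * f t) (Ici (0:ℝ)))
    (hc : c = 2 * π * ∫ t in Ici (0:ℝ), G t * f t)
    (hc2 : c < 2 * π) :
    IntegrableOn (fun t => t * min (G t) 0) (Ici (0:ℝ)) ∧
    ∀ m : ℝ → ℝ, ContDiff ℝ 2 m →
      (∀ t ≥ (0:ℝ), deriv (deriv m) t + min (G t) 0 * m t = 0) →
      m 0 = 0 → deriv m 0 = 1 →
      IntegrableOn (fun t => |min (G t) 0| * m t) (Ici (0:ℝ)) := by
  rw [integral_Ici_eq_integral_Ioi] at hc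
  rw [integrableOn_Ici_iff_integrableOn_Ioi] at hint ⊢
  have hI : ∫ t in Ioi 0, G t * f t < 1 := by nlinarith [pi_pos]
  have hGf : IntegrableOn (fun t => G t * f t) (Ioi 0) := by
    refine hint.mono' (hGc.mul hf.continuous).aestronglyMeasurable.restrict ?_
    filter_upwards [ae_restrict_mem measurableSet_Ioi] with t ht
    rw [norm_mul, Real.norm_eq_abs, Real.norm_of_nonneg (hfpos t ht).le]
  have hfd : Differentiable ℝ f := hf.differentiable (by norm_num)
  have hf'_lim := tendsto_deriv_atTop_of_ode hf hfode hGf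
  rw [hf0'] at hf'_lim
  obtain ⟨α, hα, hαf⟩ := exists_pos_mul_le_of_eventually hf.continuous hfpos one_half_pos
    (half_pos (sub_pos.mpr hI))
    ((eventually_mul_lt_of_hasDerivAt_zero ((hfd 0).hasDerivAt.congr_deriv hf0') hf0
      one_half_lt_one).mono fun _ => le_of_lt)
    (eventually_mul_le_of_tendsto_deriv_atTop hfd hf'_lim (half_lt_self (sub_pos.mpr hI)))
  have hGneg := integrableOn_mul_min_zero_of_mul_le hGc hα hαf hint
  refine ⟨hGneg, fun m hm hmode hm0 hm0' => ?_⟩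
  rw [integrableOn_Ici_iff_integrableOn_Ioi]
  exact integrableOn_abs_mul_of_ode_of_nonpos hm (fun t _ => min_le_right _ _) hmode hm0 hm0'
    (hGc.min continuous_const) (hGneg.neg.congr_fun (fun t _ => by simp) measurableSet_Ioi)
end
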